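/- arXiv:2510.23254 — 3 statements merged into one kernel-verified Lean document; each statement's English description precedes it below -/
import Mathlib

section
/- Let P_X be a Borel distribution on 𝒳 ⊆ ℝ^d, X ∼ P_X, ξ ∼ N(0,σ²) independent of X, R > 0, and g_1, g_2 : 𝒳 → [−R, R] Borel measurable. Let P_1 and P_2 be the distributions of (X, g_1(X)+ξ) and (X, g_2(X)+ξ) respectively. Then ((1 − e^{−R²/(2σ²)})/(2R²)) · E[(g_1(X) − g_2(X))²] ≤ d_H²(P_1, P_2) ≤ (1/(4σ²)) · E[(g_1(X) − g_2(X))²]. -/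
open MeasureTheory ProbabilityTheory Real
open scoped NNReal ENNReal

noncomputable section

/-- The distribution of `(X, g(X) + ξ)` where `X ∼ P_X` and `ξ ∼ N(0, σ²)` independent of `X`. -/
def gaussRegMeasure {d : ℕ} (PX : Measure (Fin d → ℝ)) (σ : ℝ)
    (g : (Fin d → ℝ) → ℝ) : Measure ((Fin d → ℝ) × ℝ) :=
  (PX.prod (gaussianReal 0 (Real.toNNReal (σ ^ 2)))).map fun q => (q.1, g q.1 + q.2)

/-- The squared Hellinger distance `∫ (√p − √q)² dν` computed with the dominating
measure `ν = P + Q`. -/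
def sqHellinger {Z : Type*} [MeasurableSpace Z] (P Q : Measure Z) : ℝ :=
  ∫ z, (Real.sqrt ((P.rnDeriv (P + Q) z).toReal)
        - Real.sqrt ((Q.rnDeriv (P + Q) z).toReal)) ^ 2 ∂(P + Q)

namespace GaussRegAux

lemma sqrt_pdf_mul (a b y : ℝ) {v : ℝ≥0} (hv : 0 < (v:ℝ)) :
    Real.sqrt (gaussianPDFReal a v y) * Real.sqrt (gaussianPDFReal b v y)
      = Real.exp (-(a-b)^2/(8*v)) * gaussianPDFReal ((a+b)/2) v y := by
  unfold gaussianPDFReal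
  rw [← Real.sqrt_mul (by positivity)]
  have h1 : ((√(2*π*(v:ℝ)))⁻¹ * rexp (- (y-a)^2/(2*v))) * ((√(2*π*(v:ℝ)))⁻¹ * rexp (- (y-b)^2/(2*v)))
      = ((√(2*π*(v:ℝ)))⁻¹)^2 * rexp (- (y-a)^2/(2*v) + - (y-b)^2/(2*v)) := by
    rw [Real.exp_add]; ring
  rw [h1, Real.sqrt_mul (by positivity), Real.sqrt_sq (by positivity), ← Real.exp_half]
  have hv' : (v:ℝ) ≠ 0 := hv.ne'
  have h2 : rexp ((-(y-a)^2/(2*(v:ℝ)) + -(y-b)^2/(2*(v:ℝ)))/2)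
      = rexp (-(a-b)^2/(8*(v:ℝ))) * rexp (-(y-(a+b)/2)^2/(2*(v:ℝ))) := by
    rw [← Real.exp_add]; congr 1; field_simp; ring
  rw [h2]; ring

lemma integral_sqrt_pdf_mul (a b : ℝ) {v : ℝ≥0} (hv : 0 < (v:ℝ)) :
    ∫ y, Real.sqrt (gaussianPDFReal a v y) * Real.sqrt (gaussianPDFReal b v y)
      = Real.exp (-(a-b)^2/(8*v)) := by
  have hvne : v ≠ 0 := by exact_mod_cast hv.ne'
  simp_rw [sqrt_pdf_mul a b _ hv]
  rw [integral_const_mul, integral_gaussianPDFReal_eq_one _ hvne, mul_one]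

lemma integrable_sqrt_pdf_mul (a b : ℝ) {v : ℝ≥0} (hv : 0 < (v:ℝ)) :
    Integrable (fun y => Real.sqrt (gaussianPDFReal a v y) * Real.sqrt (gaussianPDFReal b v y)) := by
  simp_rw [sqrt_pdf_mul a b _ hv]
  exact (integrable_gaussianPDFReal _ _).const_mul _

lemma sq_diff_pdf_eq (a b : ℝ) (v : ℝ≥0) (y : ℝ) :
    (Real.sqrt (gaussianPDFReal a v y) - Real.sqrt (gaussianPDFReal b v y))^2
      = gaussianPDFReal a v y + gaussianPDFReal b v y
        - 2 * (Real.sqrt (gaussianPDFReal a v y) * Real.sqrt (gaussianPDFReal b v y)) := by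
  have h1 := Real.sq_sqrt (gaussianPDFReal_nonneg a v y)
  have h2 := Real.sq_sqrt (gaussianPDFReal_nonneg b v y)
  nlinarith [Real.sqrt_nonneg (gaussianPDFReal a v y), Real.sqrt_nonneg (gaussianPDFReal b v y)]

lemma integrable_sq_diff_pdf (a b : ℝ) {v : ℝ≥0} (hv : 0 < (v:ℝ)) :
    Integrable (fun y => (Real.sqrt (gaussianPDFReal a v y) - Real.sqrt (gaussianPDFReal b v y))^2) := by
  have hi : Integrable (fun y => gaussianPDFReal a v y + gaussianPDFReal b v y
      - 2 * (Real.sqrt (gaussianPDFReal a v y) * Real.sqrt (gaussianPDFReal b v y))) :=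
    ((integrable_gaussianPDFReal a v).add (integrable_gaussianPDFReal b v)).sub
      ((integrable_sqrt_pdf_mul a b hv).const_mul 2)
  exact hi.congr (ae_of_all _ fun y => (sq_diff_pdf_eq a b v y).symm)

lemma integral_sq_diff_pdf (a b : ℝ) {v : ℝ≥0} (hv : 0 < (v:ℝ)) :
    ∫ y, (Real.sqrt (gaussianPDFReal a v y) - Real.sqrt (gaussianPDFReal b v y))^2
      = 2 - 2 * Real.exp (-(a-b)^2/(8*v)) := by
  have hvne : v ≠ 0 := by exact_mod_cast hv.ne'
  simp_rw [sq_diff_pdf_eq a b v]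
  have hi1 : Integrable (fun y => gaussianPDFReal a v y + gaussianPDFReal b v y) :=
    (integrable_gaussianPDFReal a v).add (integrable_gaussianPDFReal b v)
  have hi2 : Integrable (fun y => 2 * (Real.sqrt (gaussianPDFReal a v y) * Real.sqrt (gaussianPDFReal b v y))) :=
    (integrable_sqrt_pdf_mul a b hv).const_mul 2
  rw [integral_sub hi1 hi2,
    integral_add (integrable_gaussianPDFReal a v) (integrable_gaussianPDFReal b v),
    integral_gaussianPDFReal_eq_one _ hvne, integral_gaussianPDFReal_eq_one _ hvne,
    integral_const_mul, integral_sqrt_pdf_mul a b hv]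
  ring

lemma measurable_pdf_prod {d : ℕ} {g : (Fin d → ℝ) → ℝ} (hg : Measurable g) (v : ℝ≥0) :
    Measurable (fun p : (Fin d → ℝ) × ℝ => gaussianPDF (g p.1) v p.2) := by
  have : (fun p : (Fin d → ℝ) × ℝ => gaussianPDF (g p.1) v p.2)
      = fun p => ENNReal.ofReal (gaussianPDFReal 0 v (p.2 - g p.1)) := by
    funext p
    rw [gaussianPDF, gaussianPDFReal_sub, zero_add]
  rw [this]
  exact ((measurable_gaussianPDFReal 0 v).comp
    (measurable_snd.sub (hg.comp measurable_fst))).ennreal_ofReal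

lemma gaussRegMeasure_eq {d : ℕ} (PX : Measure (Fin d → ℝ)) [SigmaFinite PX]
    {σ : ℝ} (hσ : 0 < σ) {g : (Fin d → ℝ) → ℝ} (hg : Measurable g) :
    gaussRegMeasure PX σ g
      = (PX.prod volume).withDensity
          (fun p => gaussianPDF (g p.1) (Real.toNNReal (σ ^ 2)) p.2) := by
  set v : ℝ≥0 := Real.toNNReal (σ ^ 2) with hv_def
  have hv : v ≠ 0 := by
    simp only [hv_def, ne_eq, Real.toNNReal_eq_zero, not_le]
    positivity
  have he : Measurable (fun q : (Fin d → ℝ) × ℝ => (q.1, g q.1 + q.2)) :=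
    measurable_fst.prodMk ((hg.comp measurable_fst).add measurable_snd)
  ext s hs
  rw [gaussRegMeasure, Measure.map_apply he hs, Measure.prod_apply (he hs),
    withDensity_apply _ hs, ← lintegral_indicator hs _,
    lintegral_prod _ ((measurable_pdf_prod hg v).indicator hs).aemeasurable]
  refine lintegral_congr fun x => ?_
  have h1 : Prod.mk x ⁻¹' ((fun q : (Fin d → ℝ) × ℝ => (q.1, g q.1 + q.2)) ⁻¹' s)
      = (fun ξ => ξ + g x) ⁻¹' (Prod.mk x ⁻¹' s) := by
    ext ξ; simp [add_comm]
  rw [h1, ← Measure.map_apply (measurable_add_const (g x)) (measurable_prodMk_left hs),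
    gaussianReal_map_add_const (g x), zero_add, gaussianReal_apply _ hv,
    ← lintegral_indicator (measurable_prodMk_left hs) _]
  refine lintegral_congr fun y => ?_
  by_cases hy : (x, y) ∈ s <;> simp [Set.indicator, hy]

end GaussRegAux

open GaussRegAux in
lemma sqHellinger_gaussReg {d : ℕ} (PX : Measure (Fin d → ℝ)) [IsProbabilityMeasure PX]
    {σ : ℝ} (hσ : 0 < σ) {g₁ g₂ : (Fin d → ℝ) → ℝ} (hg₁ : Measurable g₁) (hg₂ : Measurable g₂) :
    sqHellinger (gaussRegMeasure PX σ g₁) (gaussRegMeasure PX σ g₂)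
      = ∫ x, (2 - 2 * Real.exp (-(g₁ x - g₂ x)^2 / (8 * σ^2))) ∂PX := by
  set v : ℝ≥0 := Real.toNNReal (σ ^ 2) with hv_def
  have hvR : (v:ℝ) = σ^2 := Real.coe_toNNReal _ (sq_nonneg σ)
  have hvpos : 0 < (v:ℝ) := by rw [hvR]; positivity
  have hv0 : v ≠ 0 := by exact_mod_cast hvpos.ne'
  set μ : Measure ((Fin d → ℝ) × ℝ) := PX.prod volume with hμ_def
  set p₁ : ((Fin d → ℝ) × ℝ) → ℝ≥0∞ := fun p => gaussianPDF (g₁ p.1) v p.2 with hp₁_def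
  set p₂ : ((Fin d → ℝ) × ℝ) → ℝ≥0∞ := fun p => gaussianPDF (g₂ p.1) v p.2 with hp₂_def
  have hp₁m : Measurable p₁ := measurable_pdf_prod hg₁ v
  have hp₂m : Measurable p₂ := measurable_pdf_prod hg₂ v
  set h : ((Fin d → ℝ) × ℝ) → ℝ≥0∞ := p₁ + p₂ with hh_def
  have hhm : Measurable h := hp₁m.add hp₂m
  have hfin : ∀ z, h z ≠ ∞ := fun z => by
    simp only [hh_def, Pi.add_apply, hp₁_def, hp₂_def, gaussianPDF]
    exact ENNReal.add_ne_top.2 ⟨ENNReal.ofReal_ne_top, ENNReal.ofReal_ne_top⟩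
  have hpos : ∀ z, h z ≠ 0 := fun z => by
    have h1 : 0 < p₁ z := gaussianPDF_pos _ hv0 _
    have : 0 < h z := lt_of_lt_of_le h1 (by simp [hh_def, le_self_add])
    exact this.ne'
  set Q₁ := gaussRegMeasure PX σ g₁ with hQ₁_def
  set Q₂ := gaussRegMeasure PX σ g₂ with hQ₂_def
  have hP₁ : Q₁ = μ.withDensity p₁ := gaussRegMeasure_eq PX hσ hg₁
  have hP₂ : Q₂ = μ.withDensity p₂ := gaussRegMeasure_eq PX hσ hg₂
  have he₁ : Measurable (fun q : (Fin d → ℝ) × ℝ => (q.1, g₁ q.1 + q.2)) :=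
    measurable_fst.prodMk ((hg₁.comp measurable_fst).add measurable_snd)
  have he₂ : Measurable (fun q : (Fin d → ℝ) × ℝ => (q.1, g₂ q.1 + q.2)) :=
    measurable_fst.prodMk ((hg₂.comp measurable_fst).add measurable_snd)
  haveI : IsProbabilityMeasure Q₁ := by
    rw [hQ₁_def, gaussRegMeasure]; exact Measure.isProbabilityMeasure_map he₁.aemeasurable
  haveI : IsProbabilityMeasure Q₂ := by
    rw [hQ₂_def, gaussRegMeasure]; exact Measure.isProbabilityMeasure_map he₂.aemeasurable
  have hν : Q₁ + Q₂ = μ.withDensity h := by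
    rw [hP₁, hP₂, hh_def, withDensity_add_left hp₁m]
  set q₁ : ((Fin d → ℝ) × ℝ) → ℝ≥0∞ := fun z => p₁ z / h z with hq₁_def
  set q₂ : ((Fin d → ℝ) × ℝ) → ℝ≥0∞ := fun z => p₂ z / h z with hq₂_def
  have hq₁m : Measurable q₁ := hp₁m.div hhm
  have hq₂m : Measurable q₂ := hp₂m.div hhm
  have key₁ : μ.withDensity p₁ = (μ.withDensity h).withDensity q₁ := by
    rw [← withDensity_mul μ hhm hq₁m]
    congr 1
    funext z
    simp only [Pi.mul_apply, hq₁_def]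
    exact (ENNReal.mul_div_cancel (hpos z) (hfin z)).symm
  have key₂ : μ.withDensity p₂ = (μ.withDensity h).withDensity q₂ := by
    rw [← withDensity_mul μ hhm hq₂m]
    congr 1
    funext z
    simp only [Pi.mul_apply, hq₂_def]
    exact (ENNReal.mul_div_cancel (hpos z) (hfin z)).symm
  have hQν₁ : Q₁ = (Q₁ + Q₂).withDensity q₁ := by rw [hν, hP₁]; exact key₁
  have hQν₂ : Q₂ = (Q₁ + Q₂).withDensity q₂ := by rw [hν, hP₂]; exact key₂
  have hrn₁ : Q₁.rnDeriv (Q₁ + Q₂) =ᵐ[Q₁ + Q₂] q₁ := by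
    have h := Measure.rnDeriv_withDensity (Q₁ + Q₂) hq₁m
    rwa [← hQν₁] at h
  have hrn₂ : Q₂.rnDeriv (Q₁ + Q₂) =ᵐ[Q₁ + Q₂] q₂ := by
    have h := Measure.rnDeriv_withDensity (Q₁ + Q₂) hq₂m
    rwa [← hQν₂] at h
  have hFm : Measurable (fun z => (Real.sqrt ((q₁ z).toReal) - Real.sqrt ((q₂ z).toReal))^2) :=
    ((hq₁m.ennreal_toReal.sqrt).sub (hq₂m.ennreal_toReal.sqrt)).pow_const 2
  have hstep1 : sqHellinger Q₁ Q₂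
      = ∫ z, (Real.sqrt ((q₁ z).toReal) - Real.sqrt ((q₂ z).toReal))^2 ∂(Q₁ + Q₂) := by
    unfold sqHellinger
    refine integral_congr_ae ?_
    filter_upwards [hrn₁, hrn₂] with z e1 e2
    rw [e1, e2]
  have hGm : Measurable (fun z => (Real.sqrt ((p₁ z).toReal) - Real.sqrt ((p₂ z).toReal))^2) :=
    ((hp₁m.ennreal_toReal.sqrt).sub (hp₂m.ennreal_toReal.sqrt)).pow_const 2
  have hstep3 : ∫⁻ z, ENNReal.ofReal ((Real.sqrt ((q₁ z).toReal) - Real.sqrt ((q₂ z).toReal))^2) ∂(Q₁ + Q₂)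
      = ∫⁻ z, ENNReal.ofReal ((Real.sqrt ((p₁ z).toReal) - Real.sqrt ((p₂ z).toReal))^2) ∂μ := by
    rw [hν, lintegral_withDensity_eq_lintegral_mul μ hhm hFm.ennreal_ofReal]
    refine lintegral_congr fun z => ?_
    simp only [Pi.mul_apply, hh_def, Pi.add_apply, hq₁_def, hq₂_def, hp₁_def, hp₂_def, gaussianPDF]
    set r₁ := gaussianPDFReal (g₁ z.1) v z.2 with hr₁
    set r₂ := gaussianPDFReal (g₂ z.1) v z.2 with hr₂
    have hr₁p : 0 < r₁ := gaussianPDFReal_pos _ _ _ hv0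
    have hr₂p : 0 < r₂ := gaussianPDFReal_pos _ _ _ hv0
    have hc : 0 < r₁ + r₂ := by linarith
    rw [ENNReal.toReal_div, ENNReal.toReal_div, ← ENNReal.ofReal_add hr₁p.le hr₂p.le,
      ENNReal.toReal_ofReal hr₁p.le, ENNReal.toReal_ofReal hr₂p.le,
      ENNReal.toReal_ofReal hc.le, ← ENNReal.ofReal_mul hc.le]
    congr 1
    rw [Real.sqrt_div hr₁p.le, Real.sqrt_div hr₂p.le, div_sub_div_same, div_pow,
      Real.sq_sqrt hc.le, mul_div_cancel₀ _ hc.ne']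
  have hstep4 : ∫⁻ z, ENNReal.ofReal ((Real.sqrt ((p₁ z).toReal) - Real.sqrt ((p₂ z).toReal))^2) ∂μ
      = ∫⁻ x, ENNReal.ofReal (2 - 2 * Real.exp (-(g₁ x - g₂ x)^2 / (8 * (v:ℝ)))) ∂PX := by
    rw [hμ_def, lintegral_prod _ hGm.ennreal_ofReal.aemeasurable]
    refine lintegral_congr fun x => ?_
    have hpt : ∀ y : ℝ, (Real.sqrt ((p₁ (x, y)).toReal) - Real.sqrt ((p₂ (x, y)).toReal))^2
        = (Real.sqrt (gaussianPDFReal (g₁ x) v y) - Real.sqrt (gaussianPDFReal (g₂ x) v y))^2 := by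
      intro y
      simp only [hp₁_def, hp₂_def, gaussianPDF,
        ENNReal.toReal_ofReal (gaussianPDFReal_nonneg _ _ _)]
    simp_rw [hpt]
    rw [← ofReal_integral_eq_lintegral_ofReal (integrable_sq_diff_pdf _ _ hvpos)
      (ae_of_all _ fun y => sq_nonneg _), integral_sq_diff_pdf _ _ hvpos]
  have hexp_le_one : ∀ x, Real.exp (-(g₁ x - g₂ x)^2 / (8 * σ^2)) ≤ 1 := fun x => by
    rw [Real.exp_le_one_iff]
    have : 0 ≤ (g₁ x - g₂ x)^2 / (8 * σ^2) := by positivity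
    rw [neg_div]
    linarith
  have hc_nonneg : ∀ x, 0 ≤ 2 - 2 * Real.exp (-(g₁ x - g₂ x)^2 / (8 * σ^2)) := fun x => by
    have := hexp_le_one x; linarith
  have hcm : Measurable (fun x => 2 - 2 * Real.exp (-(g₁ x - g₂ x)^2 / (8 * σ^2))) := by
    refine (measurable_const.sub ?_)
    exact (Real.measurable_exp.comp ((((hg₁.sub hg₂).pow_const 2).neg).div_const _)).const_mul 2
  have hc_int : Integrable (fun x => 2 - 2 * Real.exp (-(g₁ x - g₂ x)^2 / (8 * σ^2))) PX := by
    refine Integrable.mono' (integrable_const 2) hcm.aestronglyMeasurable (ae_of_all _ fun x => ?_)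
    rw [Real.norm_eq_abs, abs_of_nonneg (hc_nonneg x)]
    have := Real.exp_nonneg (-(g₁ x - g₂ x)^2 / (8 * σ^2))
    linarith
  rw [hstep1, integral_eq_lintegral_of_nonneg_ae (ae_of_all _ fun z => sq_nonneg _)
    hFm.aestronglyMeasurable, hstep3, hstep4, hvR,
    ← ofReal_integral_eq_lintegral_ofReal hc_int (ae_of_all _ hc_nonneg),
    ENNReal.toReal_ofReal (integral_nonneg hc_nonneg)]

lemma lin_lower {T t : ℝ} (hT : 0 < T) (ht0 : 0 ≤ t) (htT : t ≤ T) :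
    (1 - Real.exp (-T)) * (t / T) ≤ 1 - Real.exp (-t) := by
  have hmem : ∀ x : ℝ, x ∈ (Set.univ : Set ℝ) := fun x => Set.mem_univ x
  have hla1 : t / T ≤ 1 := (div_le_one hT).2 htT
  have hla0 : (0:ℝ) ≤ t / T := by positivity
  have hconv := convexOn_exp.2 (hmem 0) (hmem (-T)) (sub_nonneg.2 hla1) hla0
    (by ring : (1 - t/T) + t/T = 1)
  simp only [smul_eq_mul, mul_zero, zero_add, Real.exp_zero, mul_one] at hconv
  have harg : (t/T) * (-T) = -t := by field_simp
  rw [harg] at hconv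
  nlinarith

/-- Lemma: two-sided bound on the squared Hellinger distance for
Gaussian nonparametric regression. -/
theorem gaussian_regression_hellinger_bounds
    {d : ℕ} (PX : Measure (Fin d → ℝ)) [IsProbabilityMeasure PX]
    (σ : ℝ) (hσ : 0 < σ) (R : ℝ) (hR : 0 < R)
    (g₁ g₂ : (Fin d → ℝ) → ℝ) (hg₁ : Measurable g₁) (hg₂ : Measurable g₂)
    (hb₁ : ∀ x, g₁ x ∈ Set.Icc (-R) R) (hb₂ : ∀ x, g₂ x ∈ Set.Icc (-R) R)
    (P₁ P₂ : Measure ((Fin d → ℝ) × ℝ))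
    (hP₁ : P₁ = gaussRegMeasure PX σ g₁) (hP₂ : P₂ = gaussRegMeasure PX σ g₂) :
    ((1 - Real.exp (-R ^ 2 / (2 * σ ^ 2))) / (2 * R ^ 2))
        * ∫ x, (g₁ x - g₂ x) ^ 2 ∂PX
      ≤ sqHellinger P₁ P₂
    ∧ sqHellinger P₁ P₂ ≤ (1 / (4 * σ ^ 2)) * ∫ x, (g₁ x - g₂ x) ^ 2 ∂PX := by
  rw [hP₁, hP₂, sqHellinger_gaussReg PX hσ hg₁ hg₂]
  have hΔsq : ∀ x, (g₁ x - g₂ x)^2 ≤ 4 * R^2 := fun x => by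
    obtain ⟨h1, h2⟩ := hb₁ x
    obtain ⟨h3, h4⟩ := hb₂ x
    nlinarith
  have hΔm : Measurable (fun x => (g₁ x - g₂ x)^2) := (hg₁.sub hg₂).pow_const 2
  have hΔint : Integrable (fun x => (g₁ x - g₂ x)^2) PX := by
    refine Integrable.mono' (integrable_const (4 * R^2)) hΔm.aestronglyMeasurable
      (ae_of_all _ fun x => ?_)
    rw [Real.norm_eq_abs, abs_of_nonneg (sq_nonneg _)]
    exact hΔsq x
  have hexp_le_one : ∀ x, Real.exp (-(g₁ x - g₂ x)^2 / (8 * σ^2)) ≤ 1 := fun x => by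
    rw [Real.exp_le_one_iff]
    have : 0 ≤ (g₁ x - g₂ x)^2 / (8 * σ^2) := by positivity
    rw [neg_div]
    linarith
  have hc_nonneg : ∀ x, 0 ≤ 2 - 2 * Real.exp (-(g₁ x - g₂ x)^2 / (8 * σ^2)) := fun x => by
    have := hexp_le_one x; linarith
  have hcm : Measurable (fun x => 2 - 2 * Real.exp (-(g₁ x - g₂ x)^2 / (8 * σ^2))) := by
    refine (measurable_const.sub ?_)
    exact (Real.measurable_exp.comp ((((hg₁.sub hg₂).pow_const 2).neg).div_const _)).const_mul 2
  have hc_int : Integrable (fun x => 2 - 2 * Real.exp (-(g₁ x - g₂ x)^2 / (8 * σ^2))) PX := by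
    refine Integrable.mono' (integrable_const 2) hcm.aestronglyMeasurable (ae_of_all _ fun x => ?_)
    rw [Real.norm_eq_abs, abs_of_nonneg (hc_nonneg x)]
    have := Real.exp_nonneg (-(g₁ x - g₂ x)^2 / (8 * σ^2))
    linarith
  constructor
  · -- lower bound
    rw [← integral_const_mul]
    refine integral_mono (hΔint.const_mul _) hc_int fun x => ?_
    simp only
    set Δ := g₁ x - g₂ x with hΔ
    have hΔ4 : Δ^2 ≤ 4 * R^2 := hΔsq x
    set T : ℝ := R^2 / (2 * σ^2) with hT_def
    have hT : 0 < T := by positivity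
    set t : ℝ := Δ^2 / (8 * σ^2) with ht_def
    have ht0 : 0 ≤ t := by positivity
    have htT : t ≤ T := by
      rw [ht_def, hT_def, div_le_div_iff₀ (by positivity) (by positivity)]
      nlinarith
    have hlin := lin_lower hT ht0 htT
    have htt : t / T = Δ^2 / (4 * R^2) := by
      rw [ht_def, hT_def]
      field_simp
      ring
    have hnegT : -R^2 / (2 * σ^2) = -T := by rw [hT_def]; ring
    rw [htt] at hlin
    rw [hnegT, show -Δ^2 / (8 * σ^2) = -t from by rw [ht_def]; ring]
    have heq : (1 - Real.exp (-T)) / (2 * R^2) * Δ^2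
        = 2 * ((1 - Real.exp (-T)) * (Δ^2 / (4 * R^2))) := by
      field_simp; ring
    rw [heq]
    linarith [hlin]
  · -- upper bound
    rw [← integral_const_mul]
    refine integral_mono hc_int (hΔint.const_mul _) fun x => ?_
    simp only
    set Δ := g₁ x - g₂ x with hΔ
    have hkey := Real.add_one_le_exp (-(Δ^2 / (8 * σ^2)))
    rw [show -Δ^2 / (8 * σ^2) = -(Δ^2 / (8 * σ^2)) from neg_div _ _]
    have : 1 / (4 * σ^2) * Δ^2 = 2 * (Δ^2 / (8 * σ^2)) := by field_simp; ring
    rw [this]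
    linarith
end
end

section
/- Let Z be a d×r random matrix with independent N(0,1) entries and let U^(r) := Z(ZᵀZ)^{−1/2} (which is almost surely well defined and is uniformly distributed on the Stiefel manifold V_r(ℝ^d)). Let U ∈ V_r(ℝ^d) be deterministic. Then for any ε > 0 there exists c > 0, depending only on d and r, such that P(‖U^(r) − U‖_op ≤ ε) ≥ c (min(ε, 1/2))^{dr}. In particular, one may take c = (2/(25√(dr)))^{dr}, i.e. P(‖U^(r) − U‖_op ≤ ε) ≥ (2 min(ε, 1/2)/(25√(dr)))^{dr}. -/
open MeasureTheory ProbabilityTheory Real Matrix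

noncomputable section

/-- The ℓ²→ℓ² operator norm of a (rectangular) real matrix. -/
def opNorm {m n : ℕ} (A : Matrix (Fin m) (Fin n) ℝ) : ℝ :=
  sSup {r : ℝ | ∃ x : Fin n → ℝ,
    Real.sqrt (∑ i, x i ^ 2) ≤ 1 ∧ r = Real.sqrt (∑ i, A.mulVec x i ^ 2)}

instance matrixMeasurableSpace {d r : ℕ} : MeasurableSpace (Matrix (Fin d) (Fin r) ℝ) :=
  MeasurableSpace.pi

/-- The law of a `d × r` random matrix with independent `N(0,1)` entries. -/
def gaussMatrix (d r : ℕ) : Measure (Matrix (Fin d) (Fin r) ℝ) :=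
  (Measure.pi fun _ : Fin d => Measure.pi fun _ : Fin r => gaussianReal 0 1).map
    (fun f => Matrix.of f)

/-- The positive semidefinite square root, spelled out as Mathlib's former
`Matrix.PosSemidef.sqrt` (removed since). -/
def posSemidefSqrt {n : ℕ} {A : Matrix (Fin n) (Fin n) ℝ} (hA : A.IsHermitian) :
    Matrix (Fin n) (Fin n) ℝ :=
  hA.eigenvectorUnitary.1 * diagonal (RCLike.ofReal ∘ (hA.eigenvalues · |>.sqrt))
    * (star hA.eigenvectorUnitary : Matrix (Fin n) (Fin n) ℝ)

/-- The projection `Z ↦ Z (Zᵀ Z)^{−1/2}` onto the Stiefel manifold (using the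
positive-semidefinite square root of `ZᵀZ` and the Mathlib matrix inverse). -/
def stiefelProj {d r : ℕ} (Z : Matrix (Fin d) (Fin r) ℝ) : Matrix (Fin d) (Fin r) ℝ :=
  Z * (posSemidefSqrt (Matrix.posSemidef_conjTranspose_mul_self Z).1)⁻¹

namespace StiefelSmallBallAux

/-! ### Euclidean norm helper lemmas -/

lemma sqrt_sum_sq_add {k : ℕ} (a b : Fin k → ℝ) :
    Real.sqrt (∑ i, (a i + b i) ^ 2) ≤ Real.sqrt (∑ i, a i ^ 2) + Real.sqrt (∑ i, b i ^ 2) := by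
  have h := norm_add_le ((WithLp.equiv 2 (Fin k → ℝ)).symm a) ((WithLp.equiv 2 (Fin k → ℝ)).symm b)
  simpa [EuclideanSpace.norm_eq, Real.norm_eq_abs, sq_abs, ← WithLp.toLp_add] using h

lemma isometry_sq {d r : ℕ} (U : Matrix (Fin d) (Fin r) ℝ) (hU : Uᵀ * U = 1)
    (w : Fin r → ℝ) : ∑ i, (U *ᵥ w) i ^ 2 = ∑ j, w j ^ 2 := by
  have h1 : (U *ᵥ w) ⬝ᵥ (U *ᵥ w) = w ⬝ᵥ w := by
    rw [dotProduct_mulVec, ← mulVec_transpose, mulVec_mulVec, hU, one_mulVec]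
  simpa [dotProduct, pow_two] using h1

lemma mulVec_sq_le {d r : ℕ} (E : Matrix (Fin d) (Fin r) ℝ) (y : Fin r → ℝ) :
    ∑ i, (E *ᵥ y) i ^ 2 ≤ (∑ i, ∑ j, E i j ^ 2) * ∑ j, y j ^ 2 := by
  rw [Finset.sum_mul]
  refine Finset.sum_le_sum fun i _ => ?_
  have : (E *ᵥ y) i = ∑ j, E i j * y j := rfl
  rw [this]
  exact Finset.sum_mul_sq_le_sq_mul_sq _ _ _

lemma diag_sq {r : ℕ} (f : Fin r → ℝ) (K : ℝ) (hK : ∀ i, |f i| ≤ K) (w : Fin r → ℝ) :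
    ∑ i, ((diagonal f) *ᵥ w) i ^ 2 ≤ K ^ 2 * ∑ i, w i ^ 2 := by
  simp only [mulVec_diagonal]
  rw [Finset.mul_sum]
  refine Finset.sum_le_sum fun i _ => ?_
  have h1 : f i ^ 2 ≤ K ^ 2 := sq_le_sq' (abs_le.1 (hK i)).1 (abs_le.1 (hK i)).2
  calc (f i * w i) ^ 2 = f i ^ 2 * w i ^ 2 := by ring
  _ ≤ K ^ 2 * w i ^ 2 := by nlinarith [sq_nonneg (w i)]

lemma conj_diag_sq {r : ℕ} (V : Matrix (Fin r) (Fin r) ℝ)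
    (hV1 : star V * V = 1) (hV2 : V * star V = 1)
    (f : Fin r → ℝ) (K : ℝ) (hK : ∀ i, |f i| ≤ K) (x : Fin r → ℝ) :
    ∑ i, ((V * diagonal f * star V) *ᵥ x) i ^ 2 ≤ K ^ 2 * ∑ i, x i ^ 2 := by
  have hVt : star V = Vᵀ := by
    rw [star_eq_conjTranspose, conjTranspose_eq_transpose_of_trivial]
  have hVV : Vᵀ * V = 1 := by rw [← hVt]; exact hV1
  have hVVt : (Vᵀ)ᵀ * Vᵀ = 1 := by rw [transpose_transpose, ← hVt]; exact hV2
  have hsplit : (V * diagonal f * star V) *ᵥ x = V *ᵥ (diagonal f *ᵥ (Vᵀ *ᵥ x)) := by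
    rw [mulVec_mulVec, mulVec_mulVec, hVt]
  rw [hsplit, isometry_sq V hVV]
  calc ∑ i, (diagonal f *ᵥ (Vᵀ *ᵥ x)) i ^ 2 ≤ K ^ 2 * ∑ i, (Vᵀ *ᵥ x) i ^ 2 :=
        diag_sq f K hK _
  _ = K ^ 2 * ∑ i, x i ^ 2 := by rw [isometry_sq Vᵀ hVVt]

/-! ### Spectral helper lemmas -/

lemma inv_sqrt_bound (lam τ : ℝ) (hτ0 : 0 ≤ τ) (hτ : τ ≤ 17/64) (h : |lam - 1| ≤ τ) :
    |(Real.sqrt lam)⁻¹ - 1| ≤ τ ∧ |(Real.sqrt lam)⁻¹| ≤ 10/7 := by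
  have h1 := abs_le.1 h
  have hlam : (47:ℝ)/64 ≤ lam := by linarith
  have hlam0 : (0:ℝ) ≤ lam := by linarith
  set s := Real.sqrt lam with hs
  have hs0 : 0 ≤ s := Real.sqrt_nonneg _
  have hssq : s ^ 2 = lam := Real.sq_sqrt hlam0
  have hs7 : 7/10 ≤ s := by nlinarith
  have hspos : 0 < s := by linarith
  have hts : s⁻¹ * s = 1 := inv_mul_cancel₀ (ne_of_gt hspos)
  have ht0 : 0 < s⁻¹ := inv_pos.2 hspos
  have ht107 : s⁻¹ ≤ 10/7 := by
    rw [inv_le_comm₀ hspos (by norm_num)]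
    linarith
  refine ⟨abs_le.2 ⟨?_, ?_⟩, by rwa [abs_of_pos ht0]⟩
  · nlinarith
  · nlinarith

lemma sqrt_eq {d r : ℕ} (Z : Matrix (Fin d) (Fin r) ℝ) :
    posSemidefSqrt (posSemidef_conjTranspose_mul_self Z).1 =
      ((posSemidef_conjTranspose_mul_self Z).1.eigenvectorUnitary : Matrix (Fin r) (Fin r) ℝ) *
        diagonal (Real.sqrt ∘ (posSemidef_conjTranspose_mul_self Z).1.eigenvalues) *
        star ((posSemidef_conjTranspose_mul_self Z).1.eigenvectorUnitary :
          Matrix (Fin r) (Fin r) ℝ) := by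
  rw [posSemidefSqrt]
  rfl

lemma sqrt_inv {d r : ℕ} (Z : Matrix (Fin d) (Fin r) ℝ)
    (h : ∀ i, (posSemidef_conjTranspose_mul_self Z).1.eigenvalues i ≠ 0) :
    (posSemidefSqrt (posSemidef_conjTranspose_mul_self Z).1)⁻¹ =
      ((posSemidef_conjTranspose_mul_self Z).1.eigenvectorUnitary : Matrix (Fin r) (Fin r) ℝ) *
        diagonal (fun i => (Real.sqrt ((posSemidef_conjTranspose_mul_self Z).1.eigenvalues i))⁻¹) *
        star ((posSemidef_conjTranspose_mul_self Z).1.eigenvectorUnitary :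
          Matrix (Fin r) (Fin r) ℝ) := by
  set hp := posSemidef_conjTranspose_mul_self Z
  set V := (hp.1.eigenvectorUnitary : Matrix (Fin r) (Fin r) ℝ)
  have hV1 : star V * V = 1 := Unitary.coe_star_mul_self _
  have hV2 : V * star V = 1 := Unitary.coe_mul_star_self _
  apply inv_eq_right_inv
  rw [sqrt_eq]
  have key : (diagonal (Real.sqrt ∘ hp.1.eigenvalues) * (star V * V) *
      diagonal fun i => (Real.sqrt (hp.1.eigenvalues i))⁻¹) = 1 := by
    rw [hV1, mul_one, diagonal_mul_diagonal]
    have hfun : (fun i => (Real.sqrt ∘ hp.1.eigenvalues) i * (Real.sqrt (hp.1.eigenvalues i))⁻¹)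
        = fun _ => (1:ℝ) := by
      funext i
      exact mul_inv_cancel₀ (Real.sqrt_ne_zero'.mpr
        (lt_of_le_of_ne (hp.eigenvalues_nonneg i) (Ne.symm (h i))))
    rw [hfun, diagonal_one]
  calc V * diagonal (Real.sqrt ∘ hp.1.eigenvalues) * star V *
        (V * (diagonal fun i => (Real.sqrt (hp.1.eigenvalues i))⁻¹) * star V)
      = V * (diagonal (Real.sqrt ∘ hp.1.eigenvalues) * (star V * V) *
          (diagonal fun i => (Real.sqrt (hp.1.eigenvalues i))⁻¹)) * star V := by
        noncomm_ring
    _ = 1 := by rw [key, mul_one, hV2]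

lemma eigen_bound {d r : ℕ} (U Z : Matrix (Fin d) (Fin r) ℝ) (hU : Uᵀ * U = 1)
    (β : ℝ) (hβ : 0 ≤ β) (hE : ∑ i, ∑ j, (Z i j - U i j) ^ 2 ≤ β ^ 2) (i : Fin r) :
    |(posSemidef_conjTranspose_mul_self Z).1.eigenvalues i - 1| ≤ 2 * β + β ^ 2 := by
  set hp := posSemidef_conjTranspose_mul_self Z
  set v : Fin r → ℝ := ⇑(hp.1.eigenvectorBasis i) with hv
  have hnorm : ∑ k, v k ^ 2 = 1 := by
    have h1 : ‖hp.1.eigenvectorBasis i‖ = 1 := hp.1.eigenvectorBasis.orthonormal.1 i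
    have h2 := EuclideanSpace.norm_eq (hp.1.eigenvectorBasis i)
    rw [h1] at h2
    have h4 : ∑ k, ‖(hp.1.eigenvectorBasis i) k‖ ^ 2 = 1 := Real.sqrt_eq_one.1 h2.symm
    simp only [Real.norm_eq_abs, sq_abs] at h4
    exact h4
  have hvv : v ⬝ᵥ v = 1 := by simpa [dotProduct, pow_two] using hnorm
  have heig : (Zᴴ * Z) *ᵥ v = hp.1.eigenvalues i • v := hp.1.mulVec_eigenvectorBasis i
  have hquad : hp.1.eigenvalues i = (Z *ᵥ v) ⬝ᵥ (Z *ᵥ v) := by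
    have h5 : v ⬝ᵥ ((Zᴴ * Z) *ᵥ v) = hp.1.eigenvalues i := by
      rw [heig, dotProduct_smul, smul_eq_mul, hvv, mul_one]
    rw [← h5, conjTranspose_eq_transpose_of_trivial, ← mulVec_mulVec, mulVec_transpose,
      dotProduct_comm, ← dotProduct_mulVec]
  set E := Z - U with hEdef
  have hZ : Z *ᵥ v = U *ᵥ v + E *ᵥ v := by
    rw [hEdef, sub_mulVec]; ring_nf
  have hexp : (Z *ᵥ v) ⬝ᵥ (Z *ᵥ v) =
      (U *ᵥ v) ⬝ᵥ (U *ᵥ v) + 2 * ((U *ᵥ v) ⬝ᵥ (E *ᵥ v)) + (E *ᵥ v) ⬝ᵥ (E *ᵥ v) := by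
    rw [hZ]
    simp only [dotProduct, Pi.add_apply]
    rw [Finset.mul_sum, ← Finset.sum_add_distrib, ← Finset.sum_add_distrib]
    exact Finset.sum_congr rfl fun k _ => by ring
  have hUv : (U *ᵥ v) ⬝ᵥ (U *ᵥ v) = 1 := by
    have h8 : (U *ᵥ v) ⬝ᵥ (U *ᵥ v) = ∑ k, (U *ᵥ v) k ^ 2 := by simp [dotProduct, pow_two]
    rw [h8, isometry_sq U hU v, hnorm]
  have hEvsq : (E *ᵥ v) ⬝ᵥ (E *ᵥ v) ≤ β ^ 2 := by
    have h6 : (E *ᵥ v) ⬝ᵥ (E *ᵥ v) = ∑ k, (E *ᵥ v) k ^ 2 := by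
      simp [dotProduct, pow_two]
    rw [h6]
    calc ∑ k, (E *ᵥ v) k ^ 2 ≤ (∑ a, ∑ b, E a b ^ 2) * ∑ k, v k ^ 2 := mulVec_sq_le E v
    _ ≤ β ^ 2 := by rw [hnorm, mul_one]; exact hE
  have hEvnonneg : (0:ℝ) ≤ (E *ᵥ v) ⬝ᵥ (E *ᵥ v) := by
    simp only [dotProduct]
    exact Finset.sum_nonneg fun k _ => mul_self_nonneg _
  have hcross : |(U *ᵥ v) ⬝ᵥ (E *ᵥ v)| ≤ β := by
    have hcs : ((U *ᵥ v) ⬝ᵥ (E *ᵥ v)) ^ 2 ≤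
        ((U *ᵥ v) ⬝ᵥ (U *ᵥ v)) * ((E *ᵥ v) ⬝ᵥ (E *ᵥ v)) := by
      have := Finset.sum_mul_sq_le_sq_mul_sq Finset.univ
        (fun k => (U *ᵥ v) k) (fun k => (E *ᵥ v) k)
      simpa [dotProduct, pow_two] using this
    rw [hUv, one_mul] at hcs
    have h9 : ((U *ᵥ v) ⬝ᵥ (E *ᵥ v)) ^ 2 ≤ β ^ 2 := hcs.trans hEvsq
    nlinarith [abs_nonneg ((U *ᵥ v) ⬝ᵥ (E *ᵥ v)), sq_abs ((U *ᵥ v) ⬝ᵥ (E *ᵥ v))]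
  rw [hquad, hexp, hUv]
  have h7 := abs_le.1 hcross
  rw [abs_le]
  constructor <;> nlinarith [h7.1, h7.2, hEvnonneg, hEvsq]

/-! ### The key deterministic perturbation lemma -/

lemma key {d r : ℕ} (U Z : Matrix (Fin d) (Fin r) ℝ) (hU : Uᵀ * U = 1)
    (m : ℝ) (hm0 : 0 < m) (hm : m ≤ 1/2)
    (hE : ∑ i, ∑ j, (Z i j - U i j) ^ 2 ≤ (m/4) ^ 2) :
    opNorm (stiefelProj Z - U) ≤ m := by
  set hp := posSemidef_conjTranspose_mul_self Z with hhp
  set lam := hp.1.eigenvalues with hlam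
  set V := (hp.1.eigenvectorUnitary : Matrix (Fin r) (Fin r) ℝ) with hV
  have hV1 : star V * V = 1 := Unitary.coe_star_mul_self _
  have hV2 : V * star V = 1 := Unitary.coe_mul_star_self _
  have hβ0 : (0:ℝ) ≤ m/4 := by linarith
  have heb : ∀ i, |lam i - 1| ≤ 2 * (m/4) + (m/4) ^ 2 :=
    eigen_bound U Z hU (m/4) hβ0 hE
  set τ : ℝ := 2 * (m/4) + (m/4) ^ 2 with hτdef
  clear_value τ
  have hτ0 : 0 ≤ τ := by rw [hτdef]; positivity
  have hτ17 : τ ≤ 17/64 := by nlinarith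
  have hfb : ∀ i, |(Real.sqrt (lam i))⁻¹ - 1| ≤ τ ∧ |(Real.sqrt (lam i))⁻¹| ≤ 10/7 :=
    fun i => inv_sqrt_bound (lam i) τ hτ0 hτ17 (heb i)
  have hne : ∀ i, lam i ≠ 0 := by
    intro i hzero
    have h2 := (abs_le.1 (heb i)).1
    rw [hzero] at h2
    linarith
  have hinv := sqrt_inv Z hne
  set f : Fin r → ℝ := fun i => (Real.sqrt (lam i))⁻¹ with hf
  set E := Z - U with hEdef
  have hEb : ∑ i, ∑ j, E i j ^ 2 ≤ (m/4) ^ 2 := hE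
  have main : ∀ x : Fin r → ℝ, Real.sqrt (∑ i, x i ^ 2) ≤ 1 →
      Real.sqrt (∑ i, ((stiefelProj Z - U) *ᵥ x) i ^ 2) ≤ m := by
    intro x hx
    have hnsq0 : (0:ℝ) ≤ ∑ i, x i ^ 2 := Finset.sum_nonneg fun i _ => sq_nonneg _
    have hnsq1 : ∑ i, x i ^ 2 ≤ 1 := by
      have := Real.sq_sqrt hnsq0
      nlinarith [Real.sqrt_nonneg (∑ i, x i ^ 2)]
    set y : Fin r → ℝ := (V * diagonal f * star V) *ᵥ x with hy
    have hdecomp : (stiefelProj Z - U) *ᵥ x = U *ᵥ (y - x) + E *ᵥ y := by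
      have h1 : stiefelProj Z = Z * (V * diagonal f * star V) := by
        rw [stiefelProj, hinv]
      rw [sub_mulVec, h1, ← mulVec_mulVec, ← hy]
      have hZ : Z = U + E := by rw [hEdef]; abel
      rw [hZ, add_mulVec, mulVec_sub]
      abel
    rw [hdecomp]
    have hyx : y - x = (V * diagonal (fun i => f i - 1) * star V) *ᵥ x := by
      have hone : (1 : Matrix (Fin r) (Fin r) ℝ) = V * diagonal (fun _ => (1:ℝ)) * star V := by
        rw [diagonal_one, mul_one, hV2]
      have hdiff : V * diagonal f * star V - 1 = V * diagonal (fun i => f i - 1) * star V := by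
        rw [hone]
        have hdd : diagonal (fun i => f i - 1) = diagonal f - diagonal (fun _ => (1:ℝ)) := by
          rw [diagonal_sub]
        rw [hdd]
        noncomm_ring
      rw [hy, ← hdiff, sub_mulVec, one_mulVec]
    have ht1sq : ∑ i, (U *ᵥ (y - x)) i ^ 2 ≤ τ ^ 2 := by
      rw [isometry_sq U hU, hyx]
      calc ∑ i, ((V * diagonal (fun i => f i - 1) * star V) *ᵥ x) i ^ 2
          ≤ τ ^ 2 * ∑ i, x i ^ 2 :=
            conj_diag_sq V hV1 hV2 _ τ (fun i => (hfb i).1) x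
        _ ≤ τ ^ 2 := by nlinarith
    have ht1 : Real.sqrt (∑ i, (U *ᵥ (y - x)) i ^ 2) ≤ τ := by
      calc Real.sqrt (∑ i, (U *ᵥ (y - x)) i ^ 2) ≤ Real.sqrt (τ ^ 2) :=
            Real.sqrt_le_sqrt ht1sq
        _ = τ := Real.sqrt_sq hτ0
    have hy2 : ∑ i, y i ^ 2 ≤ (10/7) ^ 2 := by
      rw [hy]
      calc ∑ i, ((V * diagonal f * star V) *ᵥ x) i ^ 2 ≤ (10/7) ^ 2 * ∑ i, x i ^ 2 :=
            conj_diag_sq V hV1 hV2 _ (10/7) (fun i => (hfb i).2) x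
        _ ≤ (10/7) ^ 2 := by nlinarith
    have ht2sq : ∑ i, (E *ᵥ y) i ^ 2 ≤ ((m/4) * (10/7)) ^ 2 := by
      calc ∑ i, (E *ᵥ y) i ^ 2 ≤ (∑ i, ∑ j, E i j ^ 2) * ∑ j, y j ^ 2 := mulVec_sq_le E y
        _ ≤ ((m/4) * (10/7)) ^ 2 := by
            have hynn : (0:ℝ) ≤ ∑ j, y j ^ 2 := Finset.sum_nonneg fun j _ => sq_nonneg _
            have hEnn : (0:ℝ) ≤ ∑ i, ∑ j, E i j ^ 2 :=
              Finset.sum_nonneg fun i _ => Finset.sum_nonneg fun j _ => sq_nonneg _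
            nlinarith
    have ht2 : Real.sqrt (∑ i, (E *ᵥ y) i ^ 2) ≤ (m/4) * (10/7) := by
      calc Real.sqrt (∑ i, (E *ᵥ y) i ^ 2) ≤ Real.sqrt (((m/4) * (10/7)) ^ 2) :=
            Real.sqrt_le_sqrt ht2sq
        _ = (m/4) * (10/7) := Real.sqrt_sq (by linarith)
    calc Real.sqrt (∑ i, ((U *ᵥ (y - x)) + (E *ᵥ y)) i ^ 2)
        = Real.sqrt (∑ i, ((U *ᵥ (y - x)) i + (E *ᵥ y) i) ^ 2) := by congr 1
      _ ≤ Real.sqrt (∑ i, (U *ᵥ (y - x)) i ^ 2) + Real.sqrt (∑ i, (E *ᵥ y) i ^ 2) :=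
          sqrt_sum_sq_add _ _
      _ ≤ τ + (m/4) * (10/7) := add_le_add ht1 ht2
      _ ≤ m := by rw [hτdef]; nlinarith
  rw [opNorm]
  apply Real.sSup_le
  · rintro b ⟨x, hx1, rfl⟩
    exact main x hx1
  · linarith

/-! ### Gaussian measure helper lemmas -/

lemma pdf_lb {x : ℝ} (hx : |x| ≤ 9/8) : (4:ℝ)/25 ≤ gaussianPDFReal 0 1 x := by
  rw [gaussianPDFReal]
  have hπ : (2:ℝ) * π * 1 ≤ 2.51 ^ 2 := by
    have := Real.pi_lt_d2
    norm_num
    nlinarith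
  have hsqrt : Real.sqrt (2 * π * 1) ≤ 2.51 := by
    calc Real.sqrt (2 * π * 1) ≤ Real.sqrt (2.51 ^ 2) := Real.sqrt_le_sqrt hπ
    _ = 2.51 := Real.sqrt_sq (by norm_num)
  have hsqrtpos : 0 < Real.sqrt (2 * π * 1) := by
    apply Real.sqrt_pos.2
    nlinarith [Real.pi_pos]
  have hinv : (2.51:ℝ)⁻¹ ≤ (Real.sqrt (2 * π * 1))⁻¹ :=
    inv_anti₀ hsqrtpos hsqrt
  have hexp : Real.exp (-(81/128 : ℝ)) ≤ Real.exp (-(x - 0)^2 / (2*1)) := by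
    apply Real.exp_le_exp.2
    have : x ^ 2 ≤ (9/8) ^ 2 := by nlinarith [abs_le.1 hx, abs_nonneg x]
    nlinarith
  have hexplb : ((431:ℝ)/512) ^ 4 ≤ Real.exp (-(81/128 : ℝ)) := by
    have h1 : Real.exp (-(81/512 : ℝ)) ^ (4:ℕ) = Real.exp (-(81/128 : ℝ)) := by
      rw [← Real.exp_nat_mul]
      norm_num
    rw [← h1]
    have h2 : (431:ℝ)/512 ≤ Real.exp (-(81/512:ℝ)) := by
      have := Real.add_one_le_exp (-(81/512:ℝ))
      linarith
    exact pow_le_pow_left₀ (by norm_num) h2 4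
  calc (4:ℝ)/25 ≤ (2.51:ℝ)⁻¹ * (((431:ℝ)/512) ^ 4) := by norm_num
  _ ≤ (Real.sqrt (2 * π * 1))⁻¹ * Real.exp (-(x - 0)^2 / (2*1)) :=
      mul_le_mul hinv (hexplb.trans hexp) (by positivity) (by positivity)

lemma gauss_interval {a δ : ℝ} (ha : |a| ≤ 1) (hδ : δ ≤ 1/8) :
    ENNReal.ofReal ((8/25) * δ) ≤ gaussianReal 0 1 (Set.Icc (a - δ) (a + δ)) := by
  rw [gaussianReal_apply 0 (by norm_num) _]
  have hmono : ∀ x ∈ Set.Icc (a - δ) (a + δ), ENNReal.ofReal (4/25 : ℝ) ≤ gaussianPDF 0 1 x := by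
    intro x hx
    rw [gaussianPDF]
    apply ENNReal.ofReal_le_ofReal
    apply pdf_lb
    rw [abs_le]
    have h1 := abs_le.1 ha
    constructor <;> [linarith [hx.1]; linarith [hx.2]]
  calc ENNReal.ofReal ((8/25) * δ)
      = ENNReal.ofReal (4/25 : ℝ) * ENNReal.ofReal (2*δ) := by
        rw [← ENNReal.ofReal_mul (by norm_num)]
        congr 1
        ring
    _ = ENNReal.ofReal (4/25 : ℝ) * volume (Set.Icc (a - δ) (a + δ)) := by
        rw [Real.volume_Icc]
        congr 1
        ring_nf
    _ = ∫⁻ _ in Set.Icc (a - δ) (a + δ), ENNReal.ofReal (4/25 : ℝ) := by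
        rw [setLIntegral_const]
    _ ≤ ∫⁻ x in Set.Icc (a - δ) (a + δ), gaussianPDF 0 1 x :=
        setLIntegral_mono (measurable_gaussianPDF 0 1) hmono

lemma box_measure (d r : ℕ) (a : Matrix (Fin d) (Fin r) ℝ) (δ : ℝ) :
    gaussMatrix d r {Z | ∀ i j, |Z i j - a i j| ≤ δ} =
      ∏ i : Fin d, ∏ j : Fin r, gaussianReal 0 1 (Set.Icc (a i j - δ) (a i j + δ)) := by
  rw [gaussMatrix]
  have hid : (fun f : Fin d → Fin r → ℝ => Matrix.of f) = id := rfl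
  rw [show Measure.map (fun f : Fin d → Fin r → ℝ => Matrix.of f)
      (Measure.pi fun _ : Fin d => Measure.pi fun _ : Fin r => gaussianReal 0 1) =
      Measure.pi (fun _ : Fin d => Measure.pi fun _ : Fin r => gaussianReal 0 1) from Measure.map_id]
  have hset : {Z : Matrix (Fin d) (Fin r) ℝ | ∀ i j, |Z i j - a i j| ≤ δ} =
      Set.pi Set.univ (fun i => Set.pi Set.univ fun j => Set.Icc (a i j - δ) (a i j + δ)) := by
    ext Z
    constructor
    · intro h i _ j _
      have h2 := abs_le.1 (h i j)
      exact Set.mem_Icc.2 ⟨by linarith [h2.1], by linarith [h2.2]⟩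
    · intro h i j
      have h2 := Set.mem_Icc.1 (h i (Set.mem_univ _) j (Set.mem_univ _))
      exact abs_le.2 ⟨by linarith [h2.1], by linarith [h2.2]⟩
  rw [hset]
  exact (Measure.pi_pi _ _).trans (Finset.prod_congr rfl fun i _ => Measure.pi_pi _ _)

end StiefelSmallBallAux

open StiefelSmallBallAux in
/-- small-ball probability on the Stiefel manifold. -/
theorem stiefel_small_ball
    (d r : ℕ) (hr : 1 ≤ r) (hrd : r ≤ d)
    (U : Matrix (Fin d) (Fin r) ℝ) (hU : Uᵀ * U = 1) :
    (∃ c : ℝ, 0 < c ∧ ∀ ε : ℝ, 0 < ε →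
      ENNReal.ofReal (c * min ε (1 / 2) ^ (d * r))
        ≤ gaussMatrix d r {Z | opNorm (stiefelProj Z - U) ≤ ε})
    ∧ ∀ ε : ℝ, 0 < ε →
      ENNReal.ofReal ((2 * min ε (1 / 2) / (25 * Real.sqrt (d * r))) ^ (d * r))
        ≤ gaussMatrix d r {Z | opNorm (stiefelProj Z - U) ≤ ε} := by
  have hd : 1 ≤ d := le_trans hr hrd
  have hdr1R : (1:ℝ) ≤ (d:ℝ) * r := by
    have : (1:ℕ) ≤ d * r := Nat.one_le_iff_ne_zero.2 (by positivity)
    exact_mod_cast this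
  have hs1 : (1:ℝ) ≤ Real.sqrt ((d:ℝ) * r) := by
    rw [show (1:ℝ) = Real.sqrt 1 by simp]
    exact Real.sqrt_le_sqrt hdr1R
  have hs0 : 0 < Real.sqrt ((d:ℝ) * r) := lt_of_lt_of_le one_pos hs1
  have hssq : Real.sqrt ((d:ℝ) * r) ^ 2 = (d:ℝ) * r := Real.sq_sqrt (by linarith)
  -- main (second) bound
  have main : ∀ ε : ℝ, 0 < ε →
      ENNReal.ofReal ((2 * min ε (1 / 2) / (25 * Real.sqrt (d * r))) ^ (d * r))
        ≤ gaussMatrix d r {Z | opNorm (stiefelProj Z - U) ≤ ε} := by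
    intro ε hε
    set m := min ε (1/2) with hm
    have hm0 : 0 < m := lt_min hε (by norm_num)
    have hmle : m ≤ 1/2 := min_le_right _ _
    have hmε : m ≤ ε := min_le_left _ _
    set s := Real.sqrt ((d:ℝ) * r) with hsdef
    set δ := m / (4 * s) with hδ
    have hδ0 : 0 < δ := div_pos hm0 (by positivity)
    have hδ14 : δ ≤ m / 4 := by
      rw [hδ]
      apply div_le_div_of_nonneg_left (le_of_lt hm0) (by norm_num)
      nlinarith
    have hδ18 : δ ≤ 1/8 := by linarith
    -- box ⊆ event
    have hsub : {Z : Matrix (Fin d) (Fin r) ℝ | ∀ i j, |Z i j - U i j| ≤ δ} ⊆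
        {Z | opNorm (stiefelProj Z - U) ≤ ε} := by
      intro Z hZ
      have hEsum : ∑ i, ∑ j, (Z i j - U i j) ^ 2 ≤ (m/4) ^ 2 := by
        have step : ∀ i : Fin d, ∑ j, (Z i j - U i j) ^ 2 ≤ (r:ℝ) * δ ^ 2 := by
          intro i
          calc ∑ j, (Z i j - U i j) ^ 2 ≤ ∑ _j : Fin r, δ ^ 2 :=
                Finset.sum_le_sum fun j _ => sq_le_sq'
                  (by linarith [(abs_le.1 (hZ i j)).1]) (by linarith [(abs_le.1 (hZ i j)).2])
            _ = (r:ℝ) * δ ^ 2 := by simp [Finset.sum_const, nsmul_eq_mul]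
        calc ∑ i, ∑ j, (Z i j - U i j) ^ 2 ≤ ∑ _i : Fin d, (r:ℝ) * δ ^ 2 :=
              Finset.sum_le_sum fun i _ => step i
          _ = (d:ℝ) * ((r:ℝ) * δ ^ 2) := by simp [Finset.sum_const, nsmul_eq_mul]
          _ = (m/4) ^ 2 := by
              rw [hδ]
              field_simp
              nlinarith [hssq]
      have := key U Z hU m hm0 hmle hEsum
      exact Set.mem_setOf_eq ▸ le_trans this hmε
    refine le_trans ?_ (measure_mono hsub)
    rw [box_measure d r U δ]
    have hent : ∀ (i : Fin d) (j : Fin r),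
        ENNReal.ofReal ((8/25) * δ) ≤ gaussianReal 0 1 (Set.Icc (U i j - δ) (U i j + δ)) := by
      intro i j
      apply gauss_interval _ hδ18
      -- |U i j| ≤ 1
      have hcol : ∑ k, U k j ^ 2 = 1 := by
        have h1 := congrFun (congrFun hU j) j
        have h2 : (Uᵀ * U) j j = ∑ k, U k j ^ 2 := by
          simp [Matrix.mul_apply, Matrix.transpose_apply, pow_two]
        have h3 : (1 : Matrix (Fin r) (Fin r) ℝ) j j = 1 := Matrix.one_apply_eq j
        rw [h2, h3] at h1
        exact h1
      have hsq : U i j ^ 2 ≤ 1 := by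
        rw [← hcol]
        exact Finset.single_le_sum (f := fun k => U k j ^ 2)
          (fun k _ => sq_nonneg _) (Finset.mem_univ i)
      nlinarith [abs_nonneg (U i j), sq_abs (U i j)]
    have hbase : (2 * m / (25 * s)) = (8/25) * δ := by
      rw [hδ]
      field_simp
      ring
    calc ENNReal.ofReal ((2 * m / (25 * s)) ^ (d * r))
        = ENNReal.ofReal ((8/25) * δ) ^ (d * r) := by
          rw [hbase, ENNReal.ofReal_pow (by positivity)]
      _ = ∏ _i : Fin d, ∏ _j : Fin r, ENNReal.ofReal ((8/25) * δ) := by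
          simp [Finset.prod_const, ← pow_mul, mul_comm r d]
      _ ≤ ∏ i : Fin d, ∏ j : Fin r, gaussianReal 0 1 (Set.Icc (U i j - δ) (U i j + δ)) :=
          Finset.prod_le_prod' fun i _ => Finset.prod_le_prod' fun j _ => hent i j
  refine ⟨⟨(2 / (25 * Real.sqrt ((d:ℝ) * r))) ^ (d * r), by positivity, ?_⟩, main⟩
  intro ε hε
  refine le_trans (le_of_eq ?_) (main ε hε)
  congr 1
  rw [← mul_pow]
  congr 1
  ring
end
end

section
/- Let P_X be a distribution on the unit Euclidean ball 𝔹^d = {x ∈ ℝ^d : ‖x‖_2 ≤ 1} with the property that there exist c_0 > 0 and a closed Euclidean ball A ⊆ 𝔹^d of radius τ > 0 such that P_X(A_0) ≥ c_0 Vol_d(A_0) for all measurable A_0 ⊆ A. Let p ∈ [d], U ∈ V_p(ℝ^d), X ∼ P_X, and let Q denote the distribution of (Uᵀ X + 1_p)/2 on [0,1]^p. Then there exist c_0' > 0, depending only on c_0, τ, d and p, and a hypercube A' ⊆ [0,1]^p of side length τ/(2√p), such that Q(A_0') ≥ c_0' Vol_p(A_0') for all measurable A_0' ⊆ A'. -/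
open MeasureTheory ProbabilityTheory Real Matrix

set_option maxHeartbeats 1000000

noncomputable section

/-- push-forward density lower bound for multi-index projections.
If `P_X` on the unit ball `𝔹^d` dominates `c₀ · Lebesgue` on a closed Euclidean ball
`A ⊆ 𝔹^d` of radius `τ`, `U ∈ V_p(ℝ^d)` and `Q` is the law of `(Uᵀ X + 1_p)/2`, then there
are `c₀' > 0` (depending only on `c₀, τ, d, p`) and a hypercube `A' ⊆ [0,1]^p` of side
length `τ/(2√p)` with `Q(A₀') ≥ c₀' Vol_p(A₀')` for all measurable `A₀' ⊆ A'`. -/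
theorem multi_index_pushforward_density_lb
    (d p : ℕ) (hp : 1 ≤ p) (hpd : p ≤ d)
    (PX : Measure (EuclideanSpace ℝ (Fin d))) [IsProbabilityMeasure PX]
    (hball : PX (Metric.closedBall 0 1) = 1)
    (c₀ τ : ℝ) (hc₀ : 0 < c₀) (hτ : 0 < τ)
    (z : EuclideanSpace ℝ (Fin d)) (hA : Metric.closedBall z τ ⊆ Metric.closedBall 0 1)
    (hlb : ∀ A₀ : Set (EuclideanSpace ℝ (Fin d)), MeasurableSet A₀ →
      A₀ ⊆ Metric.closedBall z τ → ENNReal.ofReal c₀ * volume A₀ ≤ PX A₀)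
    (U : Matrix (Fin d) (Fin p) ℝ) (hU : Uᵀ * U = 1)
    (Q : Measure (Fin p → ℝ))
    (hQ : Q = PX.map fun x => fun i =>
      (Uᵀ.mulVec (WithLp.equiv 2 (Fin d → ℝ) x) i + 1) / 2) :
    ∃ c₀' : ℝ, 0 < c₀' ∧ ∃ a : Fin p → ℝ,
      (Set.univ.pi fun i => Set.Icc (a i) (a i + τ / (2 * Real.sqrt p)))
          ⊆ (Set.univ.pi fun _ : Fin p => Set.Icc (0 : ℝ) 1)
      ∧ ∀ A₀' : Set (Fin p → ℝ), MeasurableSet A₀' →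
          A₀' ⊆ (Set.univ.pi fun i => Set.Icc (a i) (a i + τ / (2 * Real.sqrt p))) →
          ENNReal.ofReal c₀' * volume A₀' ≤ Q A₀' := by
  classical
  have hp0 : (0:ℝ) < (p:ℝ) := by exact_mod_cast Nat.lt_of_lt_of_le Nat.zero_lt_one hp
  have hd0 : (0:ℝ) < (d:ℝ) := lt_of_lt_of_le hp0 (by exact_mod_cast hpd)
  set δ : ℝ := τ / (2 * Real.sqrt p) with hδdef
  have hsqp : (0:ℝ) < Real.sqrt p := Real.sqrt_pos.2 hp0
  have hsqd : (0:ℝ) < Real.sqrt d := Real.sqrt_pos.2 hd0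
  have hδpos : 0 < δ := by positivity
  set r : ℝ := τ / (2 * Real.sqrt d) with hrdef
  have hrpos : 0 < r := by positivity
  -- the columns of U are orthonormal
  set v : Fin p → EuclideanSpace ℝ (Fin d) :=
    fun i => (WithLp.equiv 2 (Fin d → ℝ)).symm (fun j => U j i) with hvdef
  have hinner : ∀ i j : Fin p, (inner ℝ (v i) (v j) : ℝ) = if i = j then 1 else 0 := by
    intro i j
    have h1 : (inner ℝ (v i) (v j) : ℝ) = ∑ k, U k i * U k j := by
      simp [hvdef, PiLp.inner_apply, mul_comm]
    have h2 : (Uᵀ * U) i j = ∑ k, U k i * U k j := by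
      simp [Matrix.mul_apply, Matrix.transpose_apply]
    rw [h1, ← h2, hU, Matrix.one_apply]
  set s : Set (Fin d) := {j | (j:ℕ) < p} with hsdef
  set v' : Fin d → EuclideanSpace ℝ (Fin d) :=
    fun j => if h : (j:ℕ) < p then v ⟨j, h⟩ else 0 with hv'def
  have horth : Orthonormal ℝ (s.restrict v') := by
    rw [orthonormal_iff_ite]
    rintro ⟨i, hi⟩ ⟨j, hj⟩
    have hi' : (i:ℕ) < p := hi
    have hj' : (j:ℕ) < p := hj
    show inner ℝ (v' i) (v' j) = _
    simp only [Set.domRestrict_apply, hv'def, dif_pos hi', dif_pos hj']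
    rw [hinner]
    simp [Subtype.ext_iff, Fin.ext_iff]
  obtain ⟨b, hb⟩ := horth.exists_orthonormalBasis_extension_of_card_eq
    (by simp [finrank_euclideanSpace])
  have hbv : ∀ i : Fin p, b (Fin.castLE hpd i) = v i := by
    intro i
    have hmem : (Fin.castLE hpd i : Fin d) ∈ s := by
      simp [hsdef, Fin.coe_castLE, i.isLt]
    have h1 := hb _ hmem
    rw [h1]
    have h' : ((Fin.castLE hpd i : Fin d) : ℕ) < p := by simp [Fin.coe_castLE, i.isLt]
    simp only [hv'def, dif_pos h']
    have h2 : (⟨((Fin.castLE hpd i : Fin d) : ℕ), h'⟩ : Fin p) = i := by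
      apply Fin.ext; simp
    rw [h2]
  -- coordinate identity
  have key : ∀ (x : EuclideanSpace ℝ (Fin d)) (i : Fin p),
      Uᵀ.mulVec (WithLp.equiv 2 (Fin d → ℝ) x) i = b.repr x (Fin.castLE hpd i) := by
    intro x i
    rw [OrthonormalBasis.repr_apply_apply, hbv, real_inner_comm]
    simp only [hvdef, PiLp.inner_apply, RCLike.inner_apply,
      Matrix.mulVec, dotProduct, Matrix.transpose_apply]
    simp [mul_comm]
  -- the projection map
  set T : EuclideanSpace ℝ (Fin d) → (Fin p → ℝ) :=
    fun x i => (b.repr x (Fin.castLE hpd i) + 1) / 2 with hTdef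
  have hTeq : (fun x => fun i =>
      (Uᵀ.mulVec (WithLp.equiv 2 (Fin d → ℝ) x) i + 1) / 2) = T := by
    funext x i
    rw [hTdef, key]
  have hTmeas : Measurable T := by
    apply measurable_pi_lambda
    intro i
    have : Continuous fun x : EuclideanSpace ℝ (Fin d) =>
        (b.repr x (Fin.castLE hpd i) + 1) / 2 := by
      have := ((continuous_apply (Fin.castLE hpd i)).comp
        ((PiLp.continuous_ofLp (p := 2) (β := fun _ : Fin d => ℝ)).comp b.repr.continuous))
      fun_prop
    exact this.measurable
  set ζ : Fin d → ℝ := fun j => b.repr z j with hζdef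
  -- bound on coordinates of z
  have hζbd : ∀ j : Fin d, |ζ j| ≤ ‖z‖ := by
    intro j
    have h1 : ζ j = inner ℝ (b j) z := b.repr_apply_apply z j
    rw [h1]
    calc |(inner ℝ (b j) z : ℝ)| ≤ ‖b j‖ * ‖z‖ := abs_real_inner_le_norm _ _
    _ = ‖z‖ := by rw [b.orthonormal.1 j]; ring
  have hzτ : ‖z‖ + τ ≤ 1 := by
    by_cases hz : z = 0
    · subst hz
      have hj0 : (0:ℕ) < d := by omega
      have hx : (τ • b ⟨0, hj0⟩ : EuclideanSpace ℝ (Fin d)) ∈ Metric.closedBall (0 : EuclideanSpace ℝ (Fin d)) τ := by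
        simp [norm_smul, b.orthonormal.1 ⟨0, hj0⟩, abs_of_pos hτ]
      have := hA hx
      simp only [Metric.mem_closedBall, dist_zero_right, norm_smul,
        b.orthonormal.1 ⟨0, hj0⟩, Real.norm_eq_abs, abs_of_pos hτ, mul_one] at this
      simpa using this
    · have hzn : 0 < ‖z‖ := norm_pos_iff.2 hz
      set u : EuclideanSpace ℝ (Fin d) := ‖z‖⁻¹ • z with hudef
      have hun : ‖u‖ = 1 := by
        rw [hudef, norm_smul, norm_inv, norm_norm, inv_mul_cancel₀ (ne_of_gt hzn)]
      have hx : (z + τ • u) ∈ Metric.closedBall z τ := by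
        simp [dist_eq_norm, norm_smul, hun, abs_of_pos hτ]
      have h2 := hA hx
      simp only [Metric.mem_closedBall, dist_zero_right] at h2
      have h3 : z + τ • u = (1 + τ * ‖z‖⁻¹) • z := by
        rw [hudef, smul_smul, add_smul, one_smul]
      have h4 : ‖z + τ • u‖ = ‖z‖ + τ := by
        rw [h3, norm_smul, Real.norm_eq_abs, abs_of_pos (by positivity)]
        field_simp
      linarith [h4 ▸ h2]
  have hδτ : δ ≤ τ := by
    rw [hδdef]
    apply div_le_self hτ.le
    have : (1:ℝ) ≤ Real.sqrt p := by
      rw [show (1:ℝ) = Real.sqrt 1 by simp]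
      exact Real.sqrt_le_sqrt (by exact_mod_cast hp)
    linarith
  -- the hypercube
  set a : Fin p → ℝ := fun i => (ζ (Fin.castLE hpd i) + 1) / 2 - δ / 2 with hadef
  have hcube : (Set.univ.pi fun i => Set.Icc (a i) (a i + δ))
      ⊆ (Set.univ.pi fun _ : Fin p => Set.Icc (0 : ℝ) 1) := by
    intro w hw i _
    have hwi := hw i (Set.mem_univ i)
    simp only [Set.mem_Icc] at hwi ⊢
    have h1 := hζbd (Fin.castLE hpd i)
    have h2 := abs_le.1 h1
    constructor
    · have : 0 ≤ a i := by
        rw [hadef]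
        simp only
        nlinarith [hzτ, h2.1]
      linarith [hwi.1]
    · have : a i + δ ≤ 1 := by
        rw [hadef]
        simp only
        nlinarith [hzτ, h2.2]
      linarith [hwi.2]
  -- the index equivalence
  have hψlt : ∀ i : Fin p, ((Fin.castLE hpd i : Fin d) : ℕ) < p := fun i => by
    simp [i.isLt]
  set ψ : Fin p ≃ {j : Fin d // (j:ℕ) < p} :=
    { toFun := fun i => ⟨Fin.castLE hpd i, hψlt i⟩
      invFun := fun j => ⟨(j.1 : ℕ), j.2⟩
      left_inv := fun i => by apply Fin.ext; simp
      right_inv := fun j => by apply Subtype.ext; apply Fin.ext; simp } with hψdef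
  have hcard1 : (Finset.univ.filter fun j : Fin d => (j:ℕ) < p).card = p := by
    have hc : Fintype.card {j : Fin d // (j:ℕ) < p} = p :=
      (Fintype.card_congr ψ.symm).trans (Fintype.card_fin p)
    rw [← Fintype.card_subtype]
    exact hc
  have hcard2 : (((Finset.univ.filter fun j : Fin d => ¬ (j:ℕ) < p).card : ℕ) : ℝ) ≤ d := by
    have h1 := Finset.card_filter_le (Finset.univ : Finset (Fin d)) (fun j => ¬ (j:ℕ) < p)
    have hcd : (Finset.univ : Finset (Fin d)).card = d := by simp
    exact_mod_cast le_trans h1 (le_of_eq hcd)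
  have hδsq : δ^2 = τ^2 / (4 * p) := by
    rw [hδdef, div_pow, mul_pow, Real.sq_sqrt hp0.le]; norm_num
  have hrsq : r^2 = τ^2 / (4 * d) := by
    rw [hrdef, div_pow, mul_pow, Real.sq_sqrt hd0.le]; norm_num
  set m : ℝ := min 1 (2 * r) with hmdef
  have hm0 : 0 < m := lt_min one_pos (by positivity)
  refine ⟨c₀ * m ^ d, by positivity, a, hcube, ?_⟩
  intro A₀' hA₀'meas hsub
  set G₁ : Set ({j : Fin d // (j:ℕ) < p} → ℝ) :=
    (fun u => fun i : Fin p => (u (ψ i) + 1) / 2) ⁻¹' A₀' with hG₁def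
  set G₂ : Set ({j : Fin d // ¬ (j:ℕ) < p} → ℝ) :=
    Set.univ.pi (fun j => Set.Icc (ζ j.1 - r) (ζ j.1 + r)) with hG₂def
  have hG₁meas : MeasurableSet G₁ := by
    apply hA₀'meas.preimage
    apply measurable_pi_lambda
    intro i
    exact ((measurable_pi_apply (ψ i)).add measurable_const).div_const 2
  have hG₂meas : MeasurableSet G₂ :=
    MeasurableSet.univ_pi fun j => measurableSet_Icc
  set e := MeasurableEquiv.piEquivPiSubtypeProd (fun _ : Fin d => ℝ)
    (fun j : Fin d => (j:ℕ) < p) with hedef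
  set Φ : EuclideanSpace ℝ (Fin d) → (Fin d → ℝ) :=
    fun x => (MeasurableEquiv.toLp 2 (Fin d → ℝ)).symm (b.repr x) with hΦdef
  have hΦmeas : Measurable Φ :=
    (MeasurableEquiv.toLp 2 (Fin d → ℝ)).symm.measurable.comp
      b.repr.continuous.measurable
  set D : Set (EuclideanSpace ℝ (Fin d)) := Φ ⁻¹' (e ⁻¹' (G₁ ×ˢ G₂)) with hDdef
  have hDmeas : MeasurableSet D :=
    (((hG₁meas.prod hG₂meas).preimage e.measurable).preimage hΦmeas)
  -- D lands in the preimage of A₀'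
  have h1 : D ⊆ T ⁻¹' A₀' := by
    intro x hx
    exact hx.1
  -- D is contained in the ball
  have h2 : D ⊆ Metric.closedBall z τ := by
    intro x hx
    have hx1 : T x ∈ A₀' := h1 hx
    have hbd : ∀ j : Fin d, (b.repr x j - ζ j)^2 ≤ (if (j:ℕ) < p then δ^2 else r^2) := by
      intro j
      by_cases hj : (j:ℕ) < p
      · rw [if_pos hj]
        set i : Fin p := ⟨(j:ℕ), hj⟩ with hidef
        have hji : Fin.castLE hpd i = j := by apply Fin.ext; simp [hidef]
        have h5 := hsub hx1 i (Set.mem_univ i)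
        simp only [Set.mem_Icc] at h5
        have hTxi : T x i = (b.repr x (Fin.castLE hpd i) + 1) / 2 := rfl
        rw [hji] at hTxi
        have hai : a i = (ζ (Fin.castLE hpd i) + 1) / 2 - δ / 2 := rfl
        rw [hji] at hai
        rw [hTxi, hai] at h5
        nlinarith [h5.1, h5.2]
      · rw [if_neg hj]
        have h5 : b.repr x j ∈ Set.Icc (ζ j - r) (ζ j + r) :=
          hx.2 ⟨j, hj⟩ (Set.mem_univ _)
        simp only [Set.mem_Icc] at h5
        nlinarith [h5.1, h5.2]
    have hsumbd : ∑ j : Fin d, (b.repr x j - ζ j)^2 ≤ τ^2 := by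
      calc ∑ j : Fin d, (b.repr x j - ζ j)^2
          ≤ ∑ j : Fin d, (if (j:ℕ) < p then δ^2 else r^2) :=
            Finset.sum_le_sum fun j _ => hbd j
        _ = (p:ℝ) * δ^2 +
            ((Finset.univ.filter fun j : Fin d => ¬ (j:ℕ) < p).card : ℝ) * r^2 := by
            rw [Finset.sum_ite, Finset.sum_const, Finset.sum_const, hcard1,
              nsmul_eq_mul, nsmul_eq_mul]
        _ ≤ τ^2 / 4 + τ^2 / 4 := by
            have e1 : (p:ℝ) * δ^2 = τ^2/4 := by rw [hδsq]; field_simp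
            have e2 : ((Finset.univ.filter fun j : Fin d => ¬ (j:ℕ) < p).card : ℝ) * r^2
                ≤ τ^2/4 := by
              rw [hrsq]
              calc ((Finset.univ.filter fun j : Fin d => ¬ (j:ℕ) < p).card : ℝ) *
                    (τ^2 / (4*d)) ≤ (d:ℝ) * (τ^2 / (4*d)) := by
                    apply mul_le_mul_of_nonneg_right hcard2 (by positivity)
                _ = τ^2/4 := by field_simp
            linarith
        _ ≤ τ^2 := by nlinarith [sq_nonneg τ]
    rw [Metric.mem_closedBall, dist_eq_norm]
    have hnorm : ‖x - z‖ = ‖b.repr x - b.repr z‖ := by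
      rw [← map_sub, b.repr.norm_map]
    rw [hnorm, EuclideanSpace.norm_eq]
    have hnorm2 : ∑ j : Fin d, ‖(b.repr x - b.repr z) j‖^2
        = ∑ j : Fin d, (b.repr x j - ζ j)^2 := by
      apply Finset.sum_congr rfl
      intro j _
      have hc : (b.repr x - b.repr z) j = b.repr x j - ζ j := rfl
      rw [hc, Real.norm_eq_abs, sq_abs]
    calc Real.sqrt (∑ j : Fin d, ‖(b.repr x - b.repr z) j‖^2)
        = Real.sqrt (∑ j : Fin d, (b.repr x j - ζ j)^2) := by rw [hnorm2]
      _ ≤ Real.sqrt (τ^2) := Real.sqrt_le_sqrt hsumbd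
      _ = τ := Real.sqrt_sq hτ.le
  -- volume identities
  have hvolD : volume D = volume G₁ * volume G₂ := by
    have hmp : MeasurePreserving Φ volume volume :=
      (EuclideanSpace.volume_preserving_symm_measurableEquiv_toLp (Fin d)).comp
        b.measurePreserving_repr
    have hmp2 := ((volume_preserving_piEquivPiSubtypeProd (fun _ : Fin d => ℝ)
      (fun j : Fin d => (j:ℕ) < p)).comp hmp)
    have h6 : volume D = volume (G₁ ×ˢ G₂) :=
      hmp2.measure_preimage (hG₁meas.prod hG₂meas).nullMeasurableSet
    rw [h6, Measure.volume_eq_prod, Measure.prod_prod]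
  have hvolG₂ : volume G₂
      = ENNReal.ofReal (2*r) ^ (Fintype.card {j : Fin d // ¬ (j:ℕ) < p}) := by
    rw [hG₂def, volume_pi_pi]
    have hIcc : ∀ j : {j : Fin d // ¬ (j:ℕ) < p},
        volume (Set.Icc (ζ j.1 - r) (ζ j.1 + r)) = ENNReal.ofReal (2*r) := by
      intro j; rw [Real.volume_Icc]; congr 1; ring
    rw [Finset.prod_congr rfl fun j _ => hIcc j, Finset.prod_const, Finset.card_univ]
  have hvolG₁ : volume A₀' ≤ volume G₁ := by
    have hmpψ := volume_measurePreserving_piCongrLeft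
      (fun _ : {j : Fin d // (j:ℕ) < p} => ℝ) ψ
    have h7 : volume ((MeasurableEquiv.piCongrLeft
        (fun _ : {j : Fin d // (j:ℕ) < p} => ℝ) ψ) ⁻¹' G₁) = volume G₁ :=
      hmpψ.measure_preimage hG₁meas.nullMeasurableSet
    have h8 : (MeasurableEquiv.piCongrLeft
        (fun _ : {j : Fin d // (j:ℕ) < p} => ℝ) ψ) ⁻¹' G₁
        = (fun w : Fin p → ℝ => w + 1) ⁻¹' (((2:ℝ)⁻¹ • ·) ⁻¹' A₀') := by
      ext w
      simp only [Set.mem_preimage, hG₁def]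
      have h9 : (fun i : Fin p => ((MeasurableEquiv.piCongrLeft
          (fun _ : {j : Fin d // (j:ℕ) < p} => ℝ) ψ) w (ψ i) + 1) / 2)
          = (2:ℝ)⁻¹ • (w + (1 : Fin p → ℝ)) := by
        funext i
        rw [MeasurableEquiv.piCongrLeft_apply_apply]
        simp only [Pi.smul_apply, Pi.add_apply, Pi.one_apply, smul_eq_mul]
        ring
      rw [h9]
    rw [← h7, h8, measure_preimage_add_right,
      Measure.addHaar_preimage_smul volume (by norm_num : ((2:ℝ)⁻¹) ≠ 0)]
    refine le_mul_of_one_le_left (by positivity) ?_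
    have habs : |(((2:ℝ)⁻¹) ^ Module.finrank ℝ (Fin p → ℝ))⁻¹|
        = 2 ^ Module.finrank ℝ (Fin p → ℝ) := by
      rw [abs_of_pos (by positivity), inv_pow, inv_inv]
    rw [habs]
    exact ENNReal.one_le_ofReal.2 (one_le_pow₀ one_le_two)
  have hG₂lb : ENNReal.ofReal (m ^ d) ≤ volume G₂ := by
    rw [hvolG₂]
    have hkd : Fintype.card {j : Fin d // ¬ (j:ℕ) < p} ≤ d := by
      have h12 := Fintype.card_subtype_le (fun j : Fin d => ¬ (j:ℕ) < p)
      simpa using h12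
    have h10 : m ^ d ≤ m ^ (Fintype.card {j : Fin d // ¬ (j:ℕ) < p}) :=
      pow_le_pow_of_le_one hm0.le (min_le_left _ _) hkd
    have h11 : m ^ (Fintype.card {j : Fin d // ¬ (j:ℕ) < p})
        ≤ (2*r) ^ (Fintype.card {j : Fin d // ¬ (j:ℕ) < p}) :=
      pow_le_pow_left₀ hm0.le (min_le_right _ _) _
    calc ENNReal.ofReal (m ^ d)
        ≤ ENNReal.ofReal ((2*r) ^ (Fintype.card {j : Fin d // ¬ (j:ℕ) < p})) :=
          ENNReal.ofReal_le_ofReal (h10.trans h11)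
      _ = ENNReal.ofReal (2*r) ^ (Fintype.card {j : Fin d // ¬ (j:ℕ) < p}) :=
          ENNReal.ofReal_pow (by positivity) _
  rw [hQ, hTeq, Measure.map_apply hTmeas hA₀'meas]
  calc ENNReal.ofReal (c₀ * m ^ d) * volume A₀'
      = ENNReal.ofReal c₀ * (ENNReal.ofReal (m ^ d) * volume A₀') := by
        rw [ENNReal.ofReal_mul hc₀.le, mul_assoc]
    _ ≤ ENNReal.ofReal c₀ * (volume G₂ * volume G₁) :=
        mul_le_mul_right (mul_le_mul' hG₂lb hvolG₁) _
    _ = ENNReal.ofReal c₀ * volume D := by rw [hvolD, mul_comm (volume G₁)]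
    _ ≤ PX D := hlb D hDmeas h2
    _ ≤ PX (T ⁻¹' A₀') := measure_mono h1
end
end
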